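/- Fix θ ∈ ℝ and let E ⊆ ℂ³ be a 3-dimensional real subspace. The following are equivalent: (i) for every basis (u,v,w) of E that is orthonormal with respect to g, Re(Υ_θ(u,v,w)) = 1 or Re(Υ_θ(u,v,w)) = −1; (ii) E is Lagrangian and Im(Υ_θ(u,v,w)) = 0 for all u, v, w ∈ E. (Proposition 2.2.) -/

import Mathlib

noncomputable section

open Complex

/-- `ℂ³`, identified with `ℝ⁶` via `(x₁,…,x₆) ↦ (x₁+i x₄, x₂+i x₅, x₃+i x₆)`. -/
abbrev C3 : Type := Fin 3 → ℂ

/-- The standard Hermitian inner product `h(u,v) = Σᵢ conj(uᵢ)·vᵢ` on `ℂ³`. -/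
def Hh (u v : C3) : ℂ := ∑ i, starRingEnd ℂ (u i) * v i

/-- The induced real inner product `g = Re h`. -/
def gR (u v : C3) : ℝ := (Hh u v).re

/-- The standard symplectic form `Ω₀ = Im h`. -/
def Om (u v : C3) : ℝ := (Hh u v).im

/-- The holomorphic volume form `Υ₀(u,v,w) = det [u v w]`. -/
def Ups (u v w : C3) : ℂ := Matrix.det (Matrix.of fun i j => ![u, v, w] j i)

/-- The phase-`θ` form `Υ_θ = e^{−iθ}·Υ₀`. -/
def UpsPh (θ : ℝ) (u v w : C3) : ℂ := Complex.exp (-(θ : ℂ) * Complex.I) * Ups u v w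

/-!
Since `h = g + iΩ₀` and `|det A|² = det (Aᴴ A)`, for a `g`-orthonormal triple `(u, v, w)`
`|Υ_θ(u,v,w)|² = 1 - Ω₀(u,v)² - Ω₀(u,w)² - Ω₀(v,w)²`.
Hence `Re Υ_θ = ±1` on an orthonormal basis of `E` forces `Im Υ_θ` and `Ω₀` to vanish on it, and
so on all of `E`, as `Ω₀` is bilinear and `Im Υ_θ` is an alternating `3`-form on the
`3`-dimensional `E`. Conversely, if `Ω₀` and `Im Υ_θ` vanish on `E`, then `Υ_θ` is real of
modulus `1` on orthonormal triples.
-/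

lemma Hh_eq_gR_add_Om_mul_I (u v : C3) : Hh u v = gR u v + Om u v * I :=
  (Complex.re_add_im _).symm

lemma Hh_swap (u v : C3) : Hh v u = starRingEnd ℂ (Hh u v) := by
  simp only [Hh, map_sum, map_mul, Complex.conj_conj, mul_comm]

lemma gR_comm (u v : C3) : gR v u = gR u v := by
  rw [gR, Hh_swap, Complex.conj_re, gR]

lemma Om_swap (u v : C3) : Om v u = -Om u v := by
  rw [Om, Hh_swap, Complex.conj_im, Om]

lemma Om_self (u : C3) : Om u u = 0 := by
  linarith [Om_swap u u]

lemma gR_eq_inner (u v : C3) :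
    gR u v = inner ℝ (WithLp.toLp 2 u : EuclideanSpace ℂ (Fin 3)) (WithLp.toLp 2 v) := by
  simp only [gR, Hh, PiLp.inner_apply, Complex.inner, Complex.re_sum]
  exact Finset.sum_congr rfl fun _ _ => by rw [mul_comm]

lemma exists_basis_gR_orthonormal (E : Submodule ℝ C3) (hdim : Module.finrank ℝ E = 3) :
    ∃ b : Module.Basis (Fin 3) ℝ E, ∀ i j, gR (b i) (b j) = if i = j then 1 else 0 := by
  let e : C3 ≃ₗ[ℝ] EuclideanSpace ℂ (Fin 3) := (WithLp.linearEquiv 2 ℝ C3).symm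
  have hF : Module.finrank ℝ (E.map e.toLinearMap) = 3 := by
    rw [LinearEquiv.finrank_map_eq, hdim]
  let ob := (stdOrthonormalBasis ℝ (E.map e.toLinearMap)).reindex (finCongr hF)
  refine ⟨ob.toBasis.map (e.submoduleMap E).symm, fun i j => ?_⟩
  rw [gR_eq_inner, ← orthonormal_iff_ite.mp ob.orthonormal i j]
  rfl

/-- `Aᴴ A` is the Gram matrix of `h` on the columns of `A`. -/
lemma star_Ups_mul_Ups (u v w : C3) :
    star (Ups u v w) * Ups u v w = (Matrix.of fun i j => Hh (![u, v, w] i) (![u, v, w] j)).det := by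
  rw [Ups, ← Matrix.det_conjTranspose, ← Matrix.det_mul]
  rfl

lemma normSq_Ups_of_orthonormal {u v w : C3}
    (huu : gR u u = 1) (hvv : gR v v = 1) (hww : gR w w = 1)
    (huv : gR u v = 0) (huw : gR u w = 0) (hvw : gR v w = 0) :
    Complex.normSq (Ups u v w) = 1 - Om u v ^ 2 - Om u w ^ 2 - Om v w ^ 2 := by
  apply Complex.ofReal_injective
  rw [Complex.normSq_eq_conj_mul_self, ← Complex.star_def, star_Ups_mul_Ups, Matrix.det_fin_three]
  simp only [Matrix.of_apply, Matrix.cons_val_zero, Matrix.cons_val_one, Matrix.cons_val_two,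
    Matrix.head_cons, Matrix.tail_cons, Hh_eq_gR_add_Om_mul_I, gR_comm u v, gR_comm u w,
    gR_comm v w, Om_swap u v, Om_swap u w, Om_swap v w, Om_self, huu, hvv, hww, huv, huw, hvw]
  push_cast
  linear_combination ((Om u v : ℂ) ^ 2 + (Om u w : ℂ) ^ 2 + (Om v w : ℂ) ^ 2) * Complex.I_sq

lemma normSq_UpsPh (θ : ℝ) (u v w : C3) :
    Complex.normSq (UpsPh θ u v w) = Complex.normSq (Ups u v w) := by
  simp [UpsPh, Complex.normSq_eq_norm_sq, Complex.norm_exp]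

lemma im_UpsPh_eq_zero_and_Om_eq_zero_of_sq_re_eq_one (θ : ℝ) {u v w : C3}
    (huu : gR u u = 1) (hvv : gR v v = 1) (hww : gR w w = 1)
    (huv : gR u v = 0) (huw : gR u w = 0) (hvw : gR v w = 0)
    (hre : (UpsPh θ u v w).re ^ 2 = 1) :
    (UpsPh θ u v w).im = 0 ∧ Om u v = 0 ∧ Om u w = 0 ∧ Om v w = 0 := by
  have h := normSq_Ups_of_orthonormal huu hvv hww huv huw hvw
  rw [← normSq_UpsPh θ, Complex.normSq_apply] at h
  refine ⟨?_, ?_, ?_, ?_⟩ <;>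
    nlinarith [sq_nonneg (UpsPh θ u v w).im, sq_nonneg (Om u v), sq_nonneg (Om u w),
      sq_nonneg (Om v w)]

def omForm : C3 →ₗ[ℝ] C3 →ₗ[ℝ] ℝ :=
  LinearMap.mk₂ ℝ Om
    (fun _ _ _ => by simp [Om, Hh, add_mul, Finset.sum_add_distrib])
    (fun _ _ _ => by simp [Om, Hh, Complex.real_smul, mul_assoc, Finset.mul_sum])
    (fun _ _ _ => by simp [Om, Hh, mul_add, Finset.sum_add_distrib])
    (fun _ _ _ => by simp [Om, Hh, Complex.real_smul, mul_left_comm, Finset.mul_sum])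

def upsPhForm (θ : ℝ) : C3 [⋀^Fin 3]→ₗ[ℝ] ℂ where
  toMultilinearMap :=
    (Complex.exp (-(θ : ℂ) * I) • Matrix.detRowAlternating).toMultilinearMap.restrictScalars ℝ
  map_eq_zero_of_eq' _ _ _ hv hij :=
    (Complex.exp (-(θ : ℂ) * I) • Matrix.detRowAlternating).map_eq_zero_of_eq _ hv hij

lemma upsPhForm_apply (θ : ℝ) (u v w : C3) : upsPhForm θ ![u, v, w] = UpsPh θ u v w := by
  rw [UpsPh, Ups, ← Matrix.det_transpose]
  rfl

lemma Om_eq_zero_of_basis {ι : Type*} [LinearOrder ι] {E : Submodule ℝ C3}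
    (b : Module.Basis ι ℝ E) (h : ∀ i j, i < j → Om (b i) (b j) = 0) :
    ∀ u ∈ E, ∀ v ∈ E, Om u v = 0 := by
  have hb : ∀ i j, Om (b i) (b j) = 0 := fun i j => by
    rcases lt_trichotomy i j with hij | rfl | hij
    · exact h i j hij
    · exact Om_self _
    · rw [Om_swap, h j i hij, neg_zero]
  have hE : omForm.compl₁₂ E.subtype E.subtype = 0 := LinearMap.ext_basis b b hb
  intro u hu v hv
  exact LinearMap.congr_fun₂ hE ⟨u, hu⟩ ⟨v, hv⟩

lemma im_UpsPh_eq_zero_of_basis (θ : ℝ) {E : Submodule ℝ C3} (b : Module.Basis (Fin 3) ℝ E)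
    (h : (UpsPh θ (b 0) (b 1) (b 2)).im = 0) :
    ∀ u ∈ E, ∀ v ∈ E, ∀ w ∈ E, (UpsPh θ u v w).im = 0 := by
  let f : E [⋀^Fin 3]→ₗ[ℝ] ℝ :=
    (Complex.imLm.compAlternatingMap (upsPhForm θ)).compLinearMap E.subtype
  have hf_apply : ∀ x y z : E, f ![x, y, z] = (UpsPh θ x y z).im := fun x y z => by
    show (upsPhForm θ (E.subtype ∘ ![x, y, z])).im = _
    rw [← FinVec.map_eq, ← upsPhForm_apply]
    rfl
  have hf : f = 0 := by
    rw [← f.map_basis_eq_zero_iff b, ← FinVec.etaExpand_eq b]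
    exact (hf_apply _ _ _).trans h
  intro u hu v hv w hw
  rw [← hf_apply ⟨u, hu⟩ ⟨v, hv⟩ ⟨w, hw⟩, hf, AlternatingMap.zero_apply]
/-- **Proposition 2.2** (Harvey–Lawson): for a 3-dimensional real subspace `E ⊆ ℂ³`,
the following are equivalent:
(i) every `g`-orthonormal basis `(u,v,w)` of `E` has `Re(Υ_θ(u,v,w)) = ±1`;
(ii) `E` is Lagrangian and `Im(Υ_θ)` vanishes on `E`.
(An orthonormal triple in the 3-dimensional subspace `E` is the same thing as an
orthonormal basis of `E`.) -/
theorem special_lagrangian_plane_tfae (θ : ℝ) (E : Submodule ℝ C3)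
    (hdim : Module.finrank ℝ E = 3) :
    (∀ u v w : C3, u ∈ E → v ∈ E → w ∈ E →
        gR u u = 1 → gR v v = 1 → gR w w = 1 →
        gR u v = 0 → gR u w = 0 → gR v w = 0 →
        (UpsPh θ u v w).re = 1 ∨ (UpsPh θ u v w).re = -1)
      ↔ ((∀ u ∈ E, ∀ v ∈ E, Om u v = 0) ∧
          (∀ u ∈ E, ∀ v ∈ E, ∀ w ∈ E, (UpsPh θ u v w).im = 0)) := by
  obtain ⟨b, hb⟩ := exists_basis_gR_orthonormal E hdim
  constructor
  · intro hi
    obtain ⟨h00, h11, h22, h01, h02, h12⟩ : gR (b 0) (b 0) = 1 ∧ gR (b 1) (b 1) = 1 ∧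
        gR (b 2) (b 2) = 1 ∧ gR (b 0) (b 1) = 0 ∧ gR (b 0) (b 2) = 0 ∧ gR (b 1) (b 2) = 0 := by
      simp [hb]
    have hre : (UpsPh θ (b 0) (b 1) (b 2)).re ^ 2 = 1 := by
      rcases hi _ _ _ (b 0).2 (b 1).2 (b 2).2 h00 h11 h22 h01 h02 h12 with h | h <;> simp [h]
    obtain ⟨him, hΩ01, hΩ02, hΩ12⟩ :=
      im_UpsPh_eq_zero_and_Om_eq_zero_of_sq_re_eq_one θ h00 h11 h22 h01 h02 h12 hre
    refine ⟨Om_eq_zero_of_basis b fun i j hij => ?_, im_UpsPh_eq_zero_of_basis θ b him⟩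
    fin_cases i <;> fin_cases j <;> first | assumption | simp at hij
  · rintro ⟨hlag, him⟩ u v w hu hv hw huu hvv hww huv huw hvw
    have h := normSq_Ups_of_orthonormal huu hvv hww huv huw hvw
    rw [← normSq_UpsPh θ, Complex.normSq_apply, him u hu v hv w hw, hlag u hu v hv,
      hlag u hu w hw, hlag v hv w hw] at h
    exact mul_self_eq_one_iff.mp (by linarith)
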